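/- In the seaweed monoid T_n (presented on generators id, g_1,...,g_{n−1} with relations g_t² = g_t; g_t g_u = g_u g_t for |t−u| ≥ 2; g_t g_u g_t = g_u g_t g_u for |t−u| = 1), the braid relation g_t g_{t+1} g_t = g_{t+1} g_t g_{t+1} holds for the corresponding simple unit-Monge matrices: P_t^Σ ⊙ P_{t+1}^Σ ⊙ P_t^Σ = P_{t+1}^Σ ⊙ P_t^Σ ⊙ P_{t+1}^Σ, where P_t is the elementary transposition permutation matrix. -/

import Mathlib

/-!
The Σ-matrix of a transposition `(a b)` with `a < b` is that of the identity, `max (j - i) 0`,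
plus one on the square `(a, b] × (a, b]`. With this closed form both triple products are computed
directly: every path `i → j₁ → j₂ → k` costs at least the closed form for `(t-1 t+1)`, and a path
with `j₁ = j₂` attains it. So both sides equal the Σ-matrix of `(t-1 t+1)`, the longest element of the
subgroup generated by `P_t` and `P_{t+1}`.
-/

def PermMat {n : ℕ} (σ : Equiv.Perm (Fin n)) : Fin n → Fin n → ℤ :=
  fun i j => if σ i = j then 1 else 0

def distSum {m n : ℕ} (D : Fin m → Fin n → ℤ) (i : Fin (m+1)) (j : Fin (n+1)) : ℤ :=
  ∑ p : Fin m, ∑ q : Fin n, if (i : ℕ) ≤ (p : ℕ) ∧ (q : ℕ) < (j : ℕ) then D p q else 0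

def distProd {n : ℕ} (A B : Fin (n+1) → Fin (n+1) → ℤ) (i k : Fin (n+1)) : ℤ :=
  Finset.univ.inf' Finset.univ_nonempty (fun j => A i j + B j k)

open Finset

section DistSum

variable {n : ℕ}

theorem distSum_permMat (σ : Equiv.Perm (Fin n)) (i j : Fin (n+1)) :
    distSum (PermMat σ) i j = ∑ p : Fin n, if (i : ℕ) ≤ p ∧ (σ p : ℕ) < j then 1 else 0 := by
  refine sum_congr rfl fun p _ => ?_
  rw [sum_eq_single (σ p) (fun q _ hq => by simp [PermMat, Ne.symm hq]) (by simp)]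
  simp [PermMat]

theorem distSum_permMat_one (i j : Fin (n+1)) :
    distSum (PermMat (1 : Equiv.Perm (Fin n))) i j = max ((j : ℤ) - i) 0 := by
  rw [distSum_permMat]
  change (∑ p : Fin n, if (i : ℕ) ≤ p ∧ (p : ℕ) < j then 1 else 0) = _
  rw [Fin.sum_univ_eq_sum_range (fun p => if (i : ℕ) ≤ p ∧ p < j then 1 else 0),
    sum_boole]
  have hIco : (range n).filter (fun p => (i : ℕ) ≤ p ∧ p < j) = Ico (i : ℕ) j := by
    ext p
    simp only [mem_filter, mem_range, mem_Ico]
    omega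
  rw [hIco, Nat.card_Ico]
  omega

def swapDistSum (n a b : ℕ) (i j : Fin (n+1)) : ℤ :=
  max ((j : ℤ) - i) 0 + if a < (i : ℕ) ∧ (i : ℕ) ≤ b ∧ a < (j : ℕ) ∧ (j : ℕ) ≤ b then 1 else 0

theorem distSum_permMat_swap {a b : Fin n} (hab : a < b) :
    distSum (PermMat (Equiv.swap a b)) = swapDistSum n a b := by
  ext i j
  rw [swapDistSum, ← distSum_permMat_one, distSum_permMat, distSum_permMat, ← sub_eq_iff_eq_add',
    ← sum_sub_distrib, Fintype.sum_eq_add a b hab.ne fun p hp => by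
      rw [Equiv.swap_apply_of_ne_of_ne hp.1 hp.2]; exact sub_self _]
  simp only [Equiv.swap_apply_left, Equiv.swap_apply_right, Equiv.Perm.one_apply]
  rw [Fin.lt_def] at hab
  split_ifs <;> omega

end DistSum

theorem distProd_distProd_eq {n : ℕ} {A B C : Fin (n+1) → Fin (n+1) → ℤ} {i k : Fin (n+1)} {x : ℤ}
    (hle : ∀ j₁ j₂, x ≤ A i j₁ + B j₁ j₂ + C j₂ k)
    (hx : ∃ j₁ j₂, A i j₁ + B j₁ j₂ + C j₂ k ≤ x) :
    distProd (distProd A B) C i k = x := by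
  obtain ⟨j₁, j₂, hj⟩ := hx
  refine le_antisymm ?_ (le_inf' _ _ fun j₂ _ => ?_)
  · calc distProd (distProd A B) C i k ≤ distProd A B i j₂ + C j₂ k := inf'_le _ (mem_univ j₂)
      _ ≤ A i j₁ + B j₁ j₂ + C j₂ k := by
          gcongr
          exact inf'_le _ (mem_univ j₁)
      _ ≤ x := hj
  · rw [← sub_le_iff_le_add]
    exact le_inf' _ _ fun j₁ _ => sub_le_iff_le_add.mpr (hle j₁ j₂)

theorem swapDistSum_braid_left (n a : ℕ) :
    distProd (distProd (swapDistSum n a (a+1)) (swapDistSum n (a+1) (a+2))) (swapDistSum n a (a+1))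
      = swapDistSum n a (a+2) := by
  ext i k
  refine distProd_distProd_eq (fun j₁ j₂ => ?_) ?_
  · simp only [swapDistSum]
    split_ifs <;> omega
  by_cases hik : (i : ℕ) = a + 1 ∧ a < (k : ℕ) ∧ (k : ℕ) ≤ a + 2
  · exact ⟨⟨a, by omega⟩, ⟨a, by omega⟩, by simp only [swapDistSum]; split_ifs <;> omega⟩
  by_cases hi : a < (i : ℕ) ∧ (i : ℕ) ≤ a + 2 ∧ ¬(a < (k : ℕ) ∧ (k : ℕ) ≤ a + 2)
  · exact ⟨k, k, by simp only [swapDistSum]; split_ifs <;> omega⟩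
  · exact ⟨i, i, by simp only [swapDistSum]; split_ifs <;> omega⟩

theorem swapDistSum_braid_right {n a : ℕ} (h : a + 3 ≤ n) :
    distProd (distProd (swapDistSum n (a+1) (a+2)) (swapDistSum n a (a+1))) (swapDistSum n (a+1) (a+2))
      = swapDistSum n a (a+2) := by
  ext i k
  refine distProd_distProd_eq (fun j₁ j₂ => ?_) ?_
  · simp only [swapDistSum]
    split_ifs <;> omega
  by_cases hi : a < (i : ℕ) ∧ (i : ℕ) ≤ a + 2
  swap
  · exact ⟨i, i, by simp only [swapDistSum]; split_ifs <;> omega⟩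
  by_cases hik : (i : ℕ) = a + 2 ∧ (k : ℕ) = a + 2
  · exact ⟨⟨a + 3, by omega⟩, ⟨a + 3, by omega⟩, by simp only [swapDistSum]; split_ifs <;> omega⟩
  by_cases hik' : (i : ℕ) = a + 1 ∧ (k : ℕ) = a + 1
  · exact ⟨⟨a + 2, by omega⟩, ⟨a + 2, by omega⟩, by simp only [swapDistSum]; split_ifs <;> omega⟩
  · exact ⟨k, k, by simp only [swapDistSum]; split_ifs <;> omega⟩

/-- the braid relation `g_t g_{t+1} g_t = g_{t+1} g_t g_{t+1}`
holds for simple unit-Monge matrices of elementary transpositions: the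
elementary transposition matrix `P_t` (swapping half-integer positions
`t−1/2`, `t+1/2`, i.e. indices `t−1`, `t`) satisfies
`P_t^Σ ⊙ P_{t+1}^Σ ⊙ P_t^Σ = P_{t+1}^Σ ⊙ P_t^Σ ⊙ P_{t+1}^Σ`. -/
theorem seaweed_braid_relation {n : ℕ} (t : ℕ) (h1 : 1 ≤ t) (h2 : t + 1 ≤ n - 1)
    (Pt Pt1 : Fin n → Fin n → ℤ)
    (hPt : Pt = PermMat (Equiv.swap (⟨t - 1, by omega⟩ : Fin n) ⟨t, by omega⟩))
    (hPt1 : Pt1 = PermMat (Equiv.swap (⟨t, by omega⟩ : Fin n) ⟨t + 1, by omega⟩)) :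
    ∀ i k : Fin (n+1),
      distProd (distProd (distSum Pt) (distSum Pt1)) (distSum Pt) i k
        = distProd (distProd (distSum Pt1) (distSum Pt)) (distSum Pt1) i k := by
  intro i k
  obtain ⟨a, rfl⟩ : ∃ a, t = a + 1 := ⟨t - 1, by omega⟩
  rw [hPt, hPt1, distSum_permMat_swap (Fin.mk_lt_mk.mpr (by omega)),
    distSum_permMat_swap (Fin.mk_lt_mk.mpr (by omega))]
  simp only [Nat.add_sub_cancel]
  rw [swapDistSum_braid_left, swapDistSum_braid_right (by omega)]
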